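/- arXiv:0909.5311 — 2 statements merged into one kernel-verified Lean document; each statement's English description precedes it below -/
import Mathlib

section
/- Let G be a connected graph with exactly h holes such that all holes of G are pairwise edge-disjoint and G has exactly one non-edge maximal clique K. If K has h+1 vertices, then there exists a vertex v of K satisfying at least one of the following: (a) there is no K-avoiding path from v to any vertex lying on any hole of G; (b) v is incident to an edge that lies both on K and on some hole of G, and v lies on no hole other than that one. -/
/-
Suppose every vertex of `K` violates (a) and (b). The key fact: if `v, w ∈ K` are joined by a path
avoiding the edge `vw` and the rest of `K`, a shortest such path closes up with `vw` into a hole;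
shortest paths are chordless, and a triangle `v m w` with `m ∉ K` would lie in a second non-edge
maximal clique. So each `v ∈ K` either lies on an edge of `K` carried by a hole (first kind) or
reaches a hole through `V \ K` (second kind). As a hole meets `K` in at most two adjacent
vertices, two vertices of `K` reaching a common hole are joined as in the key fact, which makes
them of the first kind. Hence vertices of the second kind reach pairwise distinct holes avoiding
all vertices of the first kind, while each vertex of the first kind lies on two holes (as (b)
fails) and each hole carries at most two of them. Double counting gives `|K| ≤ h`.
-/

open SimpleGraph

/-- A hole of a graph: a chordless (induced) cycle of length at least 4. -/
def SimpleGraph.IsHole {V : Type*} (G : SimpleGraph V) {v : V} (c : G.Walk v v) : Prop :=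
  c.IsCycle ∧ 4 ≤ c.length ∧
    ∀ x y, x ∈ c.support → y ∈ c.support → G.Adj x y → s(x, y) ∈ c.edges

/-- The set of edge sets of holes of `G`; its cardinality is the number of holes of `G`. -/
def SimpleGraph.holeEdgeSets {V : Type*} (G : SimpleGraph V) : Set (Set (Sym2 V)) :=
  {E | ∃ (v : V) (c : G.Walk v v), G.IsHole c ∧ E = {e | e ∈ c.edges}}

/-- All holes of `G` are pairwise edge-disjoint: two holes either have the same edge set
or share no edge. -/
def SimpleGraph.HolesEdgeDisjoint {V : Type*} (G : SimpleGraph V) : Prop :=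
  ∀ ⦃u v : V⦄ (c₁ : G.Walk u u) (c₂ : G.Walk v v), G.IsHole c₁ → G.IsHole c₂ →
    (∀ e, e ∈ c₁.edges ↔ e ∈ c₂.edges) ∨ (∀ e, e ∈ c₁.edges → e ∉ c₂.edges)

/-- A maximal clique of `G` (as a vertex set). -/
def SimpleGraph.IsMaxClique {V : Type*} (G : SimpleGraph V) (K : Set V) : Prop :=
  G.IsClique K ∧ ∀ K', G.IsClique K' → K ⊆ K' → K' = K

/-- A non-edge maximal clique: a maximal clique with at least 3 vertices. -/
def SimpleGraph.IsNonEdgeMaxClique {V : Type*} (G : SimpleGraph V) (K : Set V) : Prop :=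
  G.IsMaxClique K ∧ 3 ≤ K.ncard

/-- The clique number of `G`. -/
noncomputable def SimpleGraph.cliqueNumber {V : Type*} (G : SimpleGraph V) : ℕ :=
  sSup {n | ∃ s : Finset V, G.IsNClique n s}

/-- A `K`-avoiding path: a path which is not an edge of the clique `K` and
whose internal vertices all avoid `K`. -/
def SimpleGraph.IsKAvoidingPath {V : Type*} (G : SimpleGraph V) (K : Set V)
    {a b : V} (p : G.Walk a b) : Prop :=
  p.IsPath ∧ ¬(p.length = 1 ∧ a ∈ K ∧ b ∈ K) ∧
    ∀ w ∈ p.support, w = a ∨ w = b ∨ w ∉ K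

/-- The competition graph of a digraph given by its arc relation `D`. -/
def competitionGraph {V : Type*} (D : V → V → Prop) : SimpleGraph V where
  Adj x y := x ≠ y ∧ ∃ v, D x v ∧ D y v
  symm := by
    constructor
    rintro x y ⟨hxy, v, hx, hy⟩
    exact ⟨hxy.symm, v, hy, hx⟩
  loopless := by
    constructor
    rintro x ⟨hxx, -⟩
    exact hxx rfl

/-- A digraph is acyclic if it has no directed cycle. -/
def DigraphAcyclic {V : Type*} (D : V → V → Prop) : Prop :=
  ∀ x, ¬ Relation.TransGen D x x

/-- `G` together with `k` added isolated vertices. -/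
def SimpleGraph.addIsolated {V : Type*} (G : SimpleGraph V) (k : ℕ) :
    SimpleGraph (V ⊕ Fin k) where
  Adj a b := ∃ x y, G.Adj x y ∧ a = Sum.inl x ∧ b = Sum.inl y
  symm := by
    constructor
    rintro a b ⟨x, y, h, rfl, rfl⟩
    exact ⟨y, x, h.symm, rfl, rfl⟩
  loopless := by
    constructor
    rintro a ⟨x, y, h, rfl, hxy⟩
    exact h.ne (Sum.inl.inj hxy)

/-- The competition number of `G`: the least `k` such that `G` plus `k` isolated
vertices is the competition graph of an acyclic digraph. -/
noncomputable def competitionNumber {V : Type*} (G : SimpleGraph V) : ℕ :=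
  sInf {k | ∃ D : (V ⊕ Fin k) → (V ⊕ Fin k) → Prop,
    DigraphAcyclic D ∧ competitionGraph D = G.addIsolated k}

namespace SimpleGraph.Walk

variable {V : Type*} {G : SimpleGraph V} {u v x y z : V}

lemma IsCycle.length_eq_three_of_snd_penultimate_mem_edges {c : G.Walk u u} (hc : c.IsCycle)
    (h : s(c.snd, c.penultimate) ∈ c.edges) : c.length = 3 := by
  have h3 := hc.three_le_length
  obtain ⟨i, hi, hei⟩ := c.mk_mem_edges_iff_exists.mp h
  have inj := hc.getVert_injOn
  have inj' := hc.getVert_injOn'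
  simp only [Set.InjOn, Set.mem_ofPred_eq] at inj inj'
  rw [Sym2.eq_iff] at hei
  rcases hei with ⟨h1, h2⟩ | ⟨h1, h2⟩
  · have := inj' (by omega) (by omega) h1
    have := inj (by omega) (by omega) h2
    omega
  · have := inj (by omega) (by omega) h2
    have := inj' (by omega) (by omega) h1
    omega

lemma IsCycle.length_eq_three_of_mem_edges [DecidableEq V] {c : G.Walk u u} (hc : c.IsCycle)
    (hxy : s(x, y) ∈ c.edges) (hxz : s(x, z) ∈ c.edges) (hyz : s(y, z) ∈ c.edges) (hne : y ≠ z) :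
    c.length = 3 := by
  have hx : x ∈ c.support := c.fst_mem_support_of_mem_edges hxy
  set c' := c.rotate x hx
  have hc' : c'.IsCycle := hc.rotate hx
  have hmem : ∀ {e}, e ∈ c'.edges ↔ e ∈ c.edges := (c.rotate_edges x hx).perm.mem_iff
  have hnb : ∀ {t}, s(x, t) ∈ c.edges → t = c'.snd ∨ t = c'.penultimate := fun {t} ht => by
    have : t ∈ c'.toSubgraph.neighborSet x := adj_toSubgraph_iff_mem_edges.mpr (hmem.mpr ht)
    simpa [hc'.neighborSet_toSubgraph_endpoint] using this
  rw [← c.length_rotate x hx]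
  apply hc'.length_eq_three_of_snd_penultimate_mem_edges
  rw [hmem]
  rcases hnb hxy with rfl | rfl <;> rcases hnb hxz with rfl | rfl
  · exact absurd rfl hne
  · exact hyz
  · rwa [Sym2.eq_swap]
  · exact absurd rfl hne

lemma IsCycle.eq_or_eq_of_mem_takeUntil_of_mem_dropUntil [DecidableEq V] {c : G.Walk u u}
    (hc : c.IsCycle) (hv : v ∈ c.support) (hx : x ∈ (c.takeUntil v hv).support)
    (hx' : x ∈ (c.dropUntil v hv).support) : x = u ∨ x = v := by
  have hnd := hc.support_nodup
  rw [← c.take_spec hv, tail_support_append, List.nodup_append] at hnd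
  rw [← cons_tail_support] at hx hx'
  grind

lemma dist_getVert_of_length_eq_dist {p : G.Walk u v} (hp : p.length = G.dist u v) {i : ℕ}
    (hi : i ≤ p.length) : G.dist u (p.getVert i) = i := by
  rw [← length_eq_dist_of_subwalk hp (p.isSubwalk_take i), take_length]
  omega

lemma isChordless_of_length_eq_dist {p : G.Walk u v} (hp : p.length = G.dist u v) :
    p.IsChordless := by
  refine isChordless_iff_forall_mem_edges.mpr fun x y hx hy hadj => ?_
  obtain ⟨i, rfl, hi⟩ := mem_support_iff_exists_getVert.mp hx
  obtain ⟨j, rfl, hj⟩ := mem_support_iff_exists_getVert.mp hy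
  have hij := hadj.diff_dist_adj (u := u)
  rw [dist_getVert_of_length_eq_dist hp hi, dist_getVert_of_length_eq_dist hp hj] at hij
  rcases hij with rfl | rfl | rfl
  · exact absurd hadj (G.loopless.irrefl _)
  · exact p.mk_mem_edges_iff_exists.mpr ⟨i, by omega, rfl⟩
  · have hi0 : i ≠ 0 := by rintro rfl; exact G.loopless.irrefl _ hadj
    refine p.mk_mem_edges_iff_exists.mpr ⟨i - 1, by omega, ?_⟩
    rw [Nat.sub_add_cancel (by omega), Sym2.eq_swap]

end SimpleGraph.Walk

namespace SimpleGraph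

variable {V : Type*} {G : SimpleGraph V} {K : Set V} {u v w x y z a b : V}

lemma IsHole.eq_or_eq_or_eq_of_isClique {c : G.Walk u u} (hc : G.IsHole c) (hK : G.IsClique K)
    (hxK : x ∈ K) (hyK : y ∈ K) (hzK : z ∈ K)
    (hx : x ∈ c.support) (hy : y ∈ c.support) (hz : z ∈ c.support) :
    x = y ∨ x = z ∨ y = z := by
  classical
  by_contra! hne
  obtain ⟨hxy, hxz, hyz⟩ := hne
  have := hc.1.length_eq_three_of_mem_edges (hc.2.2 x y hx hy (hK hxK hyK hxy))
    (hc.2.2 x z hx hz (hK hxK hzK hxz)) (hc.2.2 y z hy hz (hK hyK hzK hyz)) hyz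
  have := hc.2.1
  omega

/-- `G` without the edge `vw` and without the vertices of `K \ {v, w}`, which are kept isolated. -/
def cliqueBypass (G : SimpleGraph V) (K : Set V) (v w : V) : SimpleGraph V where
  Adj a b := G.Adj a b ∧ s(a, b) ≠ s(v, w) ∧ (a ∉ K ∨ a = v ∨ a = w) ∧ (b ∉ K ∨ b = v ∨ b = w)
  symm := ⟨fun _ _ h => ⟨h.1.symm, by rw [Sym2.eq_swap]; exact h.2.1, h.2.2.2, h.2.2.1⟩⟩
  loopless := ⟨fun a h => G.loopless.irrefl a h.1⟩

lemma cliqueBypass_le : G.cliqueBypass K v w ≤ G := fun _ _ h => h.1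

lemma Walk.reachable_cliqueBypass (p : G.Walk a b) (hp : ∀ z ∈ p.support, z ∉ K ∨ z = v ∨ z = w)
    (he : s(v, w) ∉ p.edges) : (G.cliqueBypass K v w).Reachable a b := by
  refine ⟨p.transfer _ fun e he' => ?_⟩
  induction e with
  | _ x y =>
    exact ⟨p.adj_of_mem_edges he', fun h => he (h ▸ he'),
      hp x (p.fst_mem_support_of_mem_edges he'), hp y (p.snd_mem_support_of_mem_edges he')⟩

lemma Walk.mem_support_cliqueBypass (p : (G.cliqueBypass K v w).Walk a b)
    (ha : a ∉ K ∨ a = v ∨ a = w) (hz : z ∈ p.support) : z ∉ K ∨ z = v ∨ z = w := by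
  induction p with
  | nil => exact Walk.mem_support_nil_iff.mp hz ▸ ha
  | cons h q ih =>
    rcases List.mem_cons.mp hz with rfl | hz
    exacts [ha, ih h.2.2.2 hz]

lemma IsClique.subset_of_three_le_ncard [Finite V] {S : Set V} (hS : G.IsClique S)
    (h3 : 3 ≤ S.ncard) (huniq : ∀ K', G.IsNonEdgeMaxClique K' → K' = K) : S ⊆ K := by
  obtain ⟨M, hSM, hM⟩ := Finite.exists_le_maximal hS
  have hMmax : G.IsNonEdgeMaxClique M :=
    ⟨⟨hM.1, fun K' hK' hMK' => (hM.2 hK' hMK').antisymm hMK'⟩,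
      h3.trans (Set.ncard_le_ncard hSM)⟩
  exact huniq M hMmax ▸ hSM

lemma mem_of_adj_of_adj_of_adj [Finite V] (huniq : ∀ K', G.IsNonEdgeMaxClique K' → K' = K)
    (hvw : G.Adj v w) (hvz : G.Adj v z) (hwz : G.Adj w z) : z ∈ K := by
  have hS : G.IsClique {v, w, z} := by
    simp [isClique_insert, hvw, hvz, hwz, hvw.ne, hvz.ne, hwz.ne]
  have h3 : ({v, w, z} : Set V).ncard = 3 :=
    Set.ncard_eq_three.mpr ⟨v, w, z, hvw.ne, hvz.ne, hwz.ne, rfl⟩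
  exact hS.subset_of_three_le_ncard h3.ge huniq (by simp)

lemma three_le_length_of_cliqueBypass [Finite V] (hK : G.IsClique K)
    (huniq : ∀ K', G.IsNonEdgeMaxClique K' → K' = K) (hv : v ∈ K) (hw : w ∈ K) (hvw : v ≠ w)
    (P : (G.cliqueBypass K v w).Walk v w) : 3 ≤ P.length := by
  by_contra! hlt
  interval_cases hPl : P.length
  · exact hvw (Walk.eq_of_length_eq_zero hPl)
  · exact (Walk.adj_of_length_eq_one hPl).2.1 rfl
  · have hnil : ¬P.Nil := by simp [← Walk.length_eq_zero_iff, hPl]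
    have hpen : P.penultimate = P.snd := by simp [Walk.penultimate, hPl]
    have hm := P.adj_snd hnil
    have hm' := hpen ▸ P.adj_penultimate hnil
    rcases P.mem_support_cliqueBypass (.inr (.inl rfl)) (P.getVert_mem_support 1)
      with hmK | hmv | hmw
    · exact hmK (mem_of_adj_of_adj_of_adj huniq (hK hv hw hvw) hm.1 hm'.1.symm)
    · exact hm.ne hmv.symm
    · exact hm'.ne hmw

lemma exists_isHole_of_reachable_cliqueBypass [Finite V] (hK : G.IsClique K)
    (huniq : ∀ K', G.IsNonEdgeMaxClique K' → K' = K) (hv : v ∈ K) (hw : w ∈ K) (hvw : v ≠ w)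
    (hreach : (G.cliqueBypass K v w).Reachable v w) :
    ∃ c : G.Walk w w, G.IsHole c ∧ s(v, w) ∈ c.edges := by
  obtain ⟨P, hP, hPlen⟩ := hreach.exists_path_of_dist
  have hallowed : ∀ z ∈ P.support, z ∉ K ∨ z = v ∨ z = w :=
    fun z hz => P.mem_support_cliqueBypass (.inr (.inl rfl)) hz
  have hlen := three_le_length_of_cliqueBypass hK huniq hv hw hvw P
  set P' := P.mapLe cliqueBypass_le
  have hvwP : s(v, w) ∉ P.edges := fun h => (P.adj_of_mem_edges h).2.1 rfl
  refine ⟨.cons (hK hw hv hvw.symm) P', ⟨?_, ?_, ?_⟩, by simp⟩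
  · refine (Walk.cons_isCycle_iff _ _).mpr ⟨hP.mapLe _, ?_⟩
    rwa [Walk.edges_mapLe_eq_edges, Sym2.eq_swap]
  · simp only [Walk.length_cons, P', Walk.length_mapLe]
    omega
  · intro x y hx hy hxy
    by_cases he : s(x, y) = s(v, w)
    · simp [he]
    have hsupp : ∀ z ∈ (Walk.cons (hK hw hv hvw.symm) P').support, z ∈ P.support := by
      simp [P']
    have := (P.isChordless_of_length_eq_dist hPlen).mem_edges (hsupp x hx) (hsupp y hy)
      ⟨hxy, he, hallowed x (hsupp x hx), hallowed y (hsupp y hy)⟩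
    simp [P', this]

lemma IsHole.rotate [DecidableEq V] {c : G.Walk u u} (hc : G.IsHole c) (ha : a ∈ c.support) :
    G.IsHole (c.rotate a ha) := by
  have hmem : ∀ {z}, z ∈ (c.rotate a ha).support ↔ z ∈ c.support := c.mem_support_rotate_iff a ha
  refine ⟨hc.1.rotate ha, by simpa using hc.2.1, fun x y hx hy hxy => ?_⟩
  exact (c.rotate_edges a ha).perm.mem_iff.mpr (hc.2.2 x y (hmem.mp hx) (hmem.mp hy) hxy)

lemma IsHole.reachable_cliqueBypass_from_start {c : G.Walk a a} (hc : G.IsHole c)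
    (hK : G.IsClique K) (hv : v ∈ K) (hw : w ∈ K) (hb : b ∈ c.support)
    (ha' : a ∉ K ∨ a = v ∨ a = w) (hb' : b ∉ K ∨ b = v ∨ b = w) :
    (G.cliqueBypass K v w).Reachable a b := by
  classical
  set A := c.takeUntil b hb
  set B := c.dropUntil b hb
  have hsplit : ∀ {e}, e ∈ c.edges ↔ e ∈ A.edges ∨ e ∈ B.edges := by
    intro e
    rw [← List.mem_append, ← Walk.edges_append, c.take_spec hb]
  have hAsupp : ∀ {z}, z ∈ A.support → z ∈ c.support :=
    fun hz => c.support_takeUntil_subset_support hb hz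
  have hBsupp : ∀ {z}, z ∈ B.support → z ∈ c.support :=
    fun hz => c.support_dropUntil_subset_support hb hz
  have hAB : ∀ {z}, z ∈ A.support → z ∈ B.support → z = a ∨ z = b :=
    hc.1.eq_or_eq_of_mem_takeUntil_of_mem_dropUntil hb
  by_cases hA : (∀ z ∈ A.support, z ∉ K ∨ z = v ∨ z = w) ∧ s(v, w) ∉ A.edges
  · exact A.reachable_cliqueBypass hA.1 hA.2
  by_cases hB : (∀ z ∈ B.support, z ∉ K ∨ z = v ∨ z = w) ∧ s(v, w) ∉ B.edges
  · exact (B.reachable_cliqueBypass hB.1 hB.2).symm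
  exfalso
  simp only [not_and_or, not_forall, not_not, not_or] at hA hB
  rcases hA with ⟨z, hzA, hzK, hzv, hzw⟩ | hvwA <;> rcases hB with ⟨y, hyB, hyK, hyv, hyw⟩ | hvwB
  · have hzB : z ∉ B.support := fun h => by grind
    have hyA : y ∉ A.support := fun h => by grind
    have hzy : z ≠ y := fun h => hyA (h ▸ hzA)
    rcases hsplit.mp (hc.2.2 z y (hAsupp hzA) (hBsupp hyB) (hK hzK hyK hzy)) with h | h
    exacts [hyA (A.snd_mem_support_of_mem_edges h), hzB (B.fst_mem_support_of_mem_edges h)]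
  · have hvw := (B.adj_of_mem_edges hvwB).ne
    have := hc.eq_or_eq_or_eq_of_isClique hK hzK hv hw (hAsupp hzA)
      (hBsupp (B.fst_mem_support_of_mem_edges hvwB)) (hBsupp (B.snd_mem_support_of_mem_edges hvwB))
    tauto
  · have hvw := (A.adj_of_mem_edges hvwA).ne
    have := hc.eq_or_eq_or_eq_of_isClique hK hyK hv hw (hBsupp hyB)
      (hAsupp (A.fst_mem_support_of_mem_edges hvwA)) (hAsupp (A.snd_mem_support_of_mem_edges hvwA))
    tauto
  · exact hc.1.isTrail.disjoint_edges_takeUntil_dropUntil hb hvwA hvwB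

lemma IsHole.reachable_cliqueBypass {c : G.Walk u u} (hc : G.IsHole c) (hK : G.IsClique K)
    (hv : v ∈ K) (hw : w ∈ K) (ha : a ∈ c.support) (hb : b ∈ c.support)
    (ha' : a ∉ K ∨ a = v ∨ a = w) (hb' : b ∉ K ∨ b = v ∨ b = w) :
    (G.cliqueBypass K v w).Reachable a b := by
  classical
  exact (hc.rotate ha).reachable_cliqueBypass_from_start hK hv hw
    ((c.mem_support_rotate_iff a ha).mpr hb) ha' hb'

variable (G K) in
def HasCliqueEdgeOnHole (v : V) : Prop :=
  ∃ w ∈ K, ∃ (u : V) (c : G.Walk u u), G.IsHole c ∧ s(v, w) ∈ c.edges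

variable (G K) in
def ReachesHoleOffClique (v : V) (E : Set (Sym2 V)) : Prop :=
  ∃ (u a : V) (c : G.Walk u u) (p : G.Walk v a), G.IsHole c ∧ E = {e | e ∈ c.edges} ∧
    a ∈ c.support ∧ ∀ z ∈ p.support, z ∉ K ∨ z = v

lemma hasCliqueEdgeOnHole_of_reach_common_hole [Finite V] (hK : G.IsClique K)
    (huniq : ∀ K', G.IsNonEdgeMaxClique K' → K' = K) (hv : v ∈ K) (hw : w ∈ K) (hvw : v ≠ w)
    {c : G.Walk u u} (hc : G.IsHole c) (ha : a ∈ c.support) (hb : b ∈ c.support)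
    (p : G.Walk v a) (hp : ∀ z ∈ p.support, z ∉ K ∨ z = v)
    (q : G.Walk w b) (hq : ∀ z ∈ q.support, z ∉ K ∨ z = w) :
    G.HasCliqueEdgeOnHole K v := by
  have hwp : w ∉ p.support := fun h => by grind
  have hvq : v ∉ q.support := fun h => by grind
  have hva : (G.cliqueBypass K v w).Reachable v a :=
    p.reachable_cliqueBypass (fun z hz => by grind) fun h => hwp (p.snd_mem_support_of_mem_edges h)
  have hwb : (G.cliqueBypass K v w).Reachable w b :=
    q.reachable_cliqueBypass (fun z hz => by grind) fun h => hvq (q.fst_mem_support_of_mem_edges h)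
  have hab := hc.reachable_cliqueBypass hK hv hw ha hb (by grind [p.end_mem_support])
    (by grind [q.end_mem_support])
  obtain ⟨c', hc', he⟩ :=
    exists_isHole_of_reachable_cliqueBypass hK huniq hv hw hvw (hva.trans (hab.trans hwb.symm))
  exact ⟨w, hw, w, c', hc', he⟩

lemma IsKAvoidingPath.hasCliqueEdgeOnHole_or_reachesHoleOffClique [Finite V]
    (hK : G.IsClique K) (huniq : ∀ K', G.IsNonEdgeMaxClique K' → K' = K) (hv : v ∈ K)
    {c : G.Walk u u} (hc : G.IsHole c) (hx : x ∈ c.support) {p : G.Walk v x}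
    (hp : G.IsKAvoidingPath K p) :
    G.HasCliqueEdgeOnHole K v ∨ G.ReachesHoleOffClique K v {e | e ∈ c.edges} := by
  obtain ⟨hpath, hnot1, hsupp⟩ := hp
  by_cases hxK : x ∈ K ∧ x ≠ v
  · have hlen : p.length ≠ 1 := fun h => hnot1 ⟨h, hv, hxK.1⟩
    have hvx : s(v, x) ∉ p.edges := fun h => hlen (hpath.length_eq_one_of_mem_edges h)
    obtain ⟨c', hc', he⟩ := exists_isHole_of_reachable_cliqueBypass hK huniq hv hxK.1
      hxK.2.symm (p.reachable_cliqueBypass (fun z hz => by grind) hvx)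
    exact .inl ⟨x, hxK.1, x, c', hc', he⟩
  · exact .inr ⟨u, x, c, p, hc, rfl, hx, fun z hz => by grind⟩

lemma IsHole.exists_mem_edges_iff {c : G.Walk u u} (hc : G.IsHole c) :
    (∃ e ∈ {e | e ∈ c.edges}, x ∈ e) ↔ x ∈ c.support :=
  (Walk.mem_support_iff_exists_mem_edges_of_not_nil hc.1.not_nil).symm

end SimpleGraph

namespace Finset

variable {α β : Type*} {s : Finset α} {t : Finset β} {p : α → Prop} {r q : α → β → Prop}

theorem card_le_card_of_two_le_degree_or_private [DecidablePred p] [∀ a b, Decidable (r a b)]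
    (hr : ∀ a ∈ s, p a → 2 ≤ #{b ∈ t | r a b})
    (hr' : ∀ b ∈ t, #{a ∈ s | p a ∧ r a b} ≤ 2)
    (hq : ∀ a ∈ s, ¬p a → ∃ b ∈ t, q a b ∧ ∀ a' ∈ s, p a' → ¬r a' b)
    (hq' : ∀ b ∈ t, ({a ∈ s | ¬p a ∧ q a b} : Set α).Subsingleton) :
    #s ≤ #t := by
  have hp : #{a ∈ s | p a} ≤ #{b ∈ t | ∃ a ∈ s, p a ∧ r a b} := by
    have := card_mul_le_card_mul r (s := {a ∈ s | p a}) (t := {b ∈ t | ∃ a ∈ s, p a ∧ r a b})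
      (m := 2) (n := 2)
      (fun a ha => (hr a (mem_filter.mp ha).1 (mem_filter.mp ha).2).trans <| card_le_card
        fun b hb => by simp only [mem_filter, bipartiteAbove] at hb ha ⊢; grind)
      (fun b hb => by
        simpa only [bipartiteBelow, filter_filter] using hr' b (mem_filter.mp hb).1)
    omega
  have hnp : #{a ∈ s | ¬p a} ≤ #{b ∈ t | ¬∃ a ∈ s, p a ∧ r a b} := by
    classical
    exact card_le_card_of_forall_subsingleton q
      (fun a ha => by
        obtain ⟨b, hb, hab, hfree⟩ := hq a (mem_filter.mp ha).1 (mem_filter.mp ha).2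
        exact ⟨b, by simp only [mem_filter]; grind, hab⟩)
      (fun b hb => by
        simpa only [coe_filter, mem_filter, ← and_assoc] using hq' b (mem_filter.mp hb).1)
  have := card_filter_add_card_filter_not (fun a => p a) (s := s)
  have := card_filter_add_card_filter_not (fun b => ∃ a ∈ s, p a ∧ r a b) (s := t)
  omega

end Finset

namespace SimpleGraph

variable {V : Type*} {G : SimpleGraph V} {K : Set V}

lemma ncard_le_ncard_holeEdgeSets [Finite V] (hK : G.IsClique K)
    (huniq : ∀ K', G.IsNonEdgeMaxClique K' → K' = K)
    (hreach : ∀ v ∈ K, ∃ (u : V) (c : G.Walk u u) (x : V) (_ : x ∈ c.support) (p : G.Walk v x),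
      G.IsHole c ∧ G.IsKAvoidingPath K p)
    (htwo : ∀ v ∈ K, G.HasCliqueEdgeOnHole K v → ∃ E₁ ∈ G.holeEdgeSets, ∃ E₂ ∈ G.holeEdgeSets,
      E₁ ≠ E₂ ∧ (∃ e ∈ E₁, v ∈ e) ∧ ∃ e ∈ E₂, v ∈ e) :
    K.ncard ≤ G.holeEdgeSets.ncard := by
  classical
  have := Fintype.ofFinite V
  rw [Set.ncard_eq_toFinset_card', Set.ncard_eq_toFinset_card']
  refine Finset.card_le_card_of_two_le_degree_or_private (p := G.HasCliqueEdgeOnHole K)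
    (r := fun v E => ∃ e ∈ E, v ∈ e) (q := G.ReachesHoleOffClique K) ?_ ?_ ?_ ?_
  · intro v hv hv2
    obtain ⟨E₁, h₁, E₂, h₂, hne, hv₁, hv₂⟩ := htwo v (Set.mem_toFinset.mp hv) hv2
    exact Finset.one_lt_card.mpr ⟨E₁, by simp [h₁, hv₁], E₂, by simp [h₂, hv₂], hne⟩
  · intro E hE
    obtain ⟨u, c, hc, rfl⟩ := Set.mem_toFinset.mp hE
    by_contra! h
    obtain ⟨x, hx, y, hy, z, hz, hxy, hxz, hyz⟩ := Finset.two_lt_card.mp h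
    simp only [Finset.mem_filter, Set.mem_toFinset, hc.exists_mem_edges_iff] at hx hy hz
    have := hc.eq_or_eq_or_eq_of_isClique hK hx.1 hy.1 hz.1 hx.2.2 hy.2.2 hz.2.2
    tauto
  · intro v hv hv1
    obtain ⟨u, c, x, hx, p, hc, hp⟩ := hreach v (Set.mem_toFinset.mp hv)
    rcases hp.hasCliqueEdgeOnHole_or_reachesHoleOffClique hK huniq (Set.mem_toFinset.mp hv) hc hx
      with h | h
    · exact absurd h hv1
    · refine ⟨_, Set.mem_toFinset.mpr ⟨u, c, hc, rfl⟩, h, fun w hw hw2 hwc => hv1 ?_⟩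
      obtain ⟨u', a, c', p', hc', hE, ha, hp'⟩ := h
      exact hasCliqueEdgeOnHole_of_reach_common_hole hK huniq (Set.mem_toFinset.mp hv)
        (Set.mem_toFinset.mp hw) (fun h => hv1 (h ▸ hw2)) hc' ha
        (hc'.exists_mem_edges_iff.mp (hE ▸ hwc)) p' hp' .nil (by simp)
  · rintro E - v ⟨hv, hv1, hvE⟩ w ⟨hw, -, hwE⟩
    by_contra hvw
    obtain ⟨u, a, c, p, hc, rfl, ha, hp⟩ := hvE
    obtain ⟨u', b, c', q, hc', hE, hb, hq⟩ := hwE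
    exact hv1 (hasCliqueEdgeOnHole_of_reach_common_hole hK huniq (Set.mem_toFinset.mp hv)
      (Set.mem_toFinset.mp hw) hvw hc ha
      (hc.exists_mem_edges_iff.mp (hE ▸ hc'.exists_mem_edges_iff.mpr hb)) p hp q hq)

end SimpleGraph

theorem exists_vertex_of_clique_satisfying_a_or_b_general
    {V : Type*} [Fintype V] (G : SimpleGraph V)
    (h : ℕ) (hh : G.holeEdgeSets.ncard = h)
    (K : Set V)
    (hK : G.IsNonEdgeMaxClique K)
    (huniq : ∀ K', G.IsNonEdgeMaxClique K' → K' = K)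
    (hKcard : K.ncard = h + 1) :
    ∃ v ∈ K,
      (¬ ∃ (u : V) (cH : G.Walk u u) (x : V) (_ : x ∈ cH.support) (p : G.Walk v x),
          G.IsHole cH ∧ G.IsKAvoidingPath K p) ∨
      (∃ (u : V) (cH : G.Walk u u) (w : V),
          G.IsHole cH ∧ w ∈ K ∧ s(v, w) ∈ cH.edges ∧
          ∀ (u' : V) (cH' : G.Walk u' u'), G.IsHole cH' → v ∈ cH'.support →
            (∀ e, e ∈ cH'.edges ↔ e ∈ cH.edges)) := by
  by_contra! hcon
  have hle := ncard_le_ncard_holeEdgeSets hK.1.1 huniq (fun v hv => (hcon v hv).1) ?_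
  · omega
  rintro v hv ⟨w, hw, u, c, hc, hvw⟩
  obtain ⟨u', c', hc', hvc', e, he⟩ := (hcon v hv).2 u c w hc hw hvw
  refine ⟨_, ⟨u, c, hc, rfl⟩, _, ⟨u', c', hc', rfl⟩, fun hE => ?_, ⟨_, hvw, Sym2.mem_mk_left _ _⟩,
    hc'.exists_mem_edges_iff.mpr hvc'⟩
  have := Set.ext_iff.mp hE e
  grind

/-- **Lemma 3.** If a connected graph `G` with exactly `h` pairwise
edge-disjoint holes has exactly one non-edge maximal clique `K` of size `h + 1`, then
some vertex `v` of `K` satisfies: (a) there is no `K`-avoiding path from `v` to a vertex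
of a hole, or (b) `v` is incident to an edge common to `K` and some hole, and `v` lies
on no other hole. -/
theorem exists_vertex_of_clique_satisfying_a_or_b
    {V : Type*} [Fintype V] (G : SimpleGraph V) (hconn : G.Connected)
    (h : ℕ) (hh : G.holeEdgeSets.ncard = h)
    (hdisj : G.HolesEdgeDisjoint) (K : Set V)
    (hK : G.IsNonEdgeMaxClique K)
    (huniq : ∀ K', G.IsNonEdgeMaxClique K' → K' = K)
    (hKcard : K.ncard = h + 1) :
    ∃ v ∈ K,
      (¬ ∃ (u : V) (cH : G.Walk u u) (x : V) (_ : x ∈ cH.support) (p : G.Walk v x),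
          G.IsHole cH ∧ G.IsKAvoidingPath K p) ∨
      (∃ (u : V) (cH : G.Walk u u) (w : V),
          G.IsHole cH ∧ w ∈ K ∧ s(v, w) ∈ cH.edges ∧
          ∀ (u' : V) (cH' : G.Walk u' u'), G.IsHole cH' → v ∈ cH'.support →
            (∀ e, e ∈ cH'.edges ↔ e ∈ cH.edges)) :=
  exists_vertex_of_clique_satisfying_a_or_b_general G h hh K hK huniq hKcard
end

section
/- Let G be a connected graph with exactly h holes such that all holes of G are pairwise edge-disjoint and G has exactly one non-edge maximal clique K, let H be a hole of G, and let e = v_i v_j be an edge of H such that G − e has at least h holes. Then every hole of G − e that is not a hole of G is the cycle obtained from H by replacing the edge v_i v_j with the two edges v_i v_k and v_j v_k for some vertex v_k of K. -/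
open SimpleGraph

/-! A hole `C` of `G - vᵢvⱼ` that is not a hole of `G` passes through both `vᵢ` and `vⱼ`, so it
splits into two internally disjoint chordless `vᵢ`–`vⱼ` paths of `G - vᵢvⱼ`, each of length at
least 2. A path of length 2 closes a triangle on `vᵢvⱼ`, whose apex lies in the unique non-edge
maximal clique `K`; a longer one closes a hole of `G` through `vᵢvⱼ`, which by edge-disjointness
has the edges of `H`. Two paths of length 2 would have adjacent apices in `K`, a chord of `C`;
two longer ones would both have the edges of `H` other than `vᵢvⱼ`, yet share no edge. -/

namespace SimpleGraph

variable {V : Type*} {G : SimpleGraph V}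

namespace Walk

lemma exists_edges_eq_of_length_eq_two {a b : V} (p : G.Walk a b) (h : p.length = 2) :
    ∃ k, G.Adj a k ∧ G.Adj k b ∧ p.edges = [s(a, k), s(k, b)] := by
  match p, h with
  | cons hak (cons hkb nil), _ => exact ⟨_, hak, hkb, rfl⟩

lemma IsCycle.eq_or_eq_of_mem_support_append {u v : V} {p : G.Walk u v} {q : G.Walk v u}
    (hc : (p.append q).IsCycle) {x : V} (hp : x ∈ p.support) (hq : x ∈ q.support) :
    x = u ∨ x = v := by
  have hnd := hc.support_nodup
  rw [tail_support_append, List.nodup_append] at hnd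
  rw [← cons_tail_support] at hp hq
  rcases List.mem_cons.1 hp with rfl | hp
  · exact .inl rfl
  rcases List.mem_cons.1 hq with rfl | hq
  · exact .inr rfl
  exact absurd rfl (hnd.2.2 _ hp _ hq)

lemma IsCycle.exists_isPath_union {u a b : V} {c : G.Walk u u} (hc : c.IsCycle)
    (ha : a ∈ c.support) (hb : b ∈ c.support) (hab : a ≠ b) :
    ∃ p q : G.Walk a b, p.IsPath ∧ q.IsPath ∧
      (∀ x ∈ p.support, x ∈ q.support → x = a ∨ x = b) ∧
      (∀ x, x ∈ c.support ↔ x ∈ p.support ∨ x ∈ q.support) ∧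
      (∀ f, f ∈ c.edges ↔ f ∈ p.edges ∨ f ∈ q.edges) := by
  classical
  set c₀ := c.rotate a ha
  have hb₀ : b ∈ c₀.support := (mem_support_rotate_iff c a ha).2 hb
  set p := c₀.takeUntil b hb₀
  set r := c₀.dropUntil b hb₀
  have hc₀ : (p.append r).IsCycle := (c₀.take_spec hb₀).symm ▸ hc.rotate ha
  refine ⟨p, r.reverse, (hc.rotate ha).isPath_takeUntil hb₀,
    (hc₀.isPath_of_append_right (not_nil_of_ne hab)).reverse,
    fun x hp hq => hc₀.eq_or_eq_of_mem_support_append hp (by simpa using hq), fun x => ?_,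
    fun f => ?_⟩
  · rw [← mem_support_rotate_iff c a ha]
    change x ∈ c₀.support ↔ _
    rw [← c₀.take_spec hb₀, mem_support_append_iff, support_reverse, List.mem_reverse]
  · rw [← (c.rotate_edges a ha).perm.mem_iff]
    change f ∈ c₀.edges ↔ _
    rw [← c₀.take_spec hb₀, edges_append, List.mem_append, edges_reverse, List.mem_reverse]

lemma eq_of_mem_support_of_mem_edges {a b x y : V} {p q : G.Walk a b}
    (hpq : ∀ z ∈ p.support, z ∈ q.support → z = a ∨ z = b)
    (hx : x ∈ p.support) (hy : y ∈ p.support) (hq : s(x, y) ∈ q.edges) : s(x, y) = s(a, b) := by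
  have hxy := q.adj_of_mem_edges hq
  rcases hpq x hx (q.fst_mem_support_of_mem_edges hq) with rfl | rfl <;>
    rcases hpq y hy (q.snd_mem_support_of_mem_edges hq) with rfl | rfl
  · exact absurd rfl hxy.ne
  · rfl
  · exact Sym2.eq_swap
  · exact absurd rfl hxy.ne

lemma notMem_edges_of_mem_edges {a b : V} {p q : G.Walk a b} (hab : ¬ G.Adj a b)
    (hpq : ∀ z ∈ p.support, z ∈ q.support → z = a ∨ z = b) {f : Sym2 V}
    (hp : f ∈ p.edges) : f ∉ q.edges := by
  induction f using Sym2.ind with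
  | _ x y =>
    intro hq
    have hxy := p.edges_subset_edgeSet hp
    rw [eq_of_mem_support_of_mem_edges hpq (p.fst_mem_support_of_mem_edges hp)
      (p.snd_mem_support_of_mem_edges hp) hq] at hxy
    exact hab hxy

lemma IsChordless.of_union {u a b : V} {c : G.Walk u u} (hc : c.IsChordless)
    {p q : G.Walk a b} (hab : ¬ G.Adj a b)
    (hpq : ∀ z ∈ p.support, z ∈ q.support → z = a ∨ z = b)
    (hsupp : ∀ x ∈ p.support, x ∈ c.support)
    (hedges : ∀ f ∈ c.edges, f ∈ p.edges ∨ f ∈ q.edges) : p.IsChordless := by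
  refine isChordless_iff_forall_mem_edges.2 fun x y hx hy hxy => ?_
  refine (hedges _ (hc.mem_edges (hsupp x hx) (hsupp y hy) hxy)).resolve_right fun hq => hab ?_
  rw [← SimpleGraph.mem_edgeSet, ← eq_of_mem_support_of_mem_edges hpq hx hy hq]
  exact hxy

end Walk

open Walk

lemma isHole_iff {u : V} {c : G.Walk u u} :
    G.IsHole c ↔ c.IsCycle ∧ 4 ≤ c.length ∧ c.IsChordless := by
  rw [isChordless_iff_forall_mem_edges]
  rfl

lemma IsClique.subset_of_forall_isNonEdgeMaxClique_eq [Finite V] {K T : Set V}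
    (huniq : ∀ K', G.IsNonEdgeMaxClique K' → K' = K) (hT : G.IsClique T) (h3 : 3 ≤ T.ncard) :
    T ⊆ K := by
  obtain ⟨K₀, hTK₀, hK₀⟩ := Finite.exists_le_maximal (p := G.IsClique) hT
  have hmax : G.IsMaxClique K₀ := ⟨hK₀.prop, fun _ hK' hsub => hK₀.eq_of_superset hK' hsub⟩
  rw [← huniq K₀ ⟨hmax, h3.trans (Set.ncard_le_ncard hTK₀ (Set.toFinite _))⟩]
  exact hTK₀

lemma mem_of_forall_isNonEdgeMaxClique_eq [Finite V] {K : Set V}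
    (huniq : ∀ K', G.IsNonEdgeMaxClique K' → K' = K) {a b c : V}
    (hab : G.Adj a b) (hac : G.Adj a c) (hbc : G.Adj b c) : c ∈ K := by
  classical
  have h3 := is3Clique_triple_iff.2 ⟨hab, hac, hbc⟩
  refine h3.isClique.subset_of_forall_isNonEdgeMaxClique_eq huniq ?_ (by simp)
  rw [Set.ncard_coe_finset, h3.card_eq]

section DeleteEdge

variable {a b : V}

lemma mem_holeEdgeSets_of_isHole_deleteEdges {u : V} {c : (G.deleteEdges {s(a, b)}).Walk u u}
    (hc : (G.deleteEdges {s(a, b)}).IsHole c) (hab : ¬ (a ∈ c.support ∧ b ∈ c.support)) :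
    {f | f ∈ c.edges} ∈ G.holeEdgeSets := by
  refine ⟨u, c.mapLe (G.deleteEdges_le _), ⟨hc.1.mapLe _, by simpa using hc.2.1, ?_⟩, by simp⟩
  intro x y hx hy hxy
  rw [support_mapLe_eq_support] at hx hy
  rw [edges_mapLe_eq_edges]
  refine hc.2.2 x y hx hy (deleteEdges_adj.2 ⟨hxy, fun he => hab ?_⟩)
  rcases Sym2.eq_iff.1 he with ⟨rfl, rfl⟩ | ⟨rfl, rfl⟩
  exacts [⟨hx, hy⟩, ⟨hy, hx⟩]

lemma isHole_cons_mapLe (hba : G.Adj b a) {p : (G.deleteEdges {s(a, b)}).Walk a b}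
    (hp : p.IsPath) (hch : p.IsChordless) (hlen : 3 ≤ p.length) :
    G.IsHole (cons hba (p.mapLe (G.deleteEdges_le _))) := by
  have he : s(b, a) ∉ p.edges := fun he => by
    simpa [Sym2.eq_swap] using p.edges_subset_edgeSet he
  refine isHole_iff.2 ⟨(cons_isCycle_iff _ _).2 ⟨hp.mapLe _, by simpa using he⟩,
    by simpa using hlen, isChordless_iff_forall_mem_edges.2 fun x y hx hy hxy => ?_⟩
  simp only [support_cons, support_mapLe_eq_support, List.mem_cons] at hx hy
  replace hx : x ∈ p.support := hx.elim (· ▸ p.end_mem_support) id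
  replace hy : y ∈ p.support := hy.elim (· ▸ p.end_mem_support) id
  by_cases hxy' : s(x, y) = s(a, b)
  · rw [hxy', edges_cons, Sym2.eq_swap]
    exact List.mem_cons_self
  · rw [edges_cons, edges_mapLe_eq_edges]
    exact List.mem_cons_of_mem _ (hch.mem_edges hx hy (deleteEdges_adj.2 ⟨hxy, hxy'⟩))

lemma not_isChordless_of_edges_eq_pair {K : Set V} (hK : G.IsClique K) {u : V}
    {c : (G.deleteEdges {s(a, b)}).Walk u u} {p q : (G.deleteEdges {s(a, b)}).Walk a b}
    (hpq : ∀ z ∈ p.support, z ∈ q.support → z = a ∨ z = b)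
    (hsupp : ∀ x, x ∈ c.support ↔ x ∈ p.support ∨ x ∈ q.support)
    (hedges : ∀ f, f ∈ c.edges ↔ f ∈ p.edges ∨ f ∈ q.edges) {k l : V} (hk : k ∈ K) (hl : l ∈ K)
    (hp : p.edges = [s(a, k), s(k, b)]) (hq : q.edges = [s(a, l), s(l, b)]) :
    ¬ c.IsChordless := by
  intro hc
  have hak := p.adj_of_mem_edges (by simp [hp] : s(a, k) ∈ p.edges)
  have hkb := p.adj_of_mem_edges (by simp [hp] : s(k, b) ∈ p.edges)
  have hal := q.adj_of_mem_edges (by simp [hq] : s(a, l) ∈ q.edges)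
  have hlb := q.adj_of_mem_edges (by simp [hq] : s(l, b) ∈ q.edges)
  have hkp : k ∈ p.support := p.snd_mem_support_of_mem_edges (by simp [hp] : s(a, k) ∈ p.edges)
  have hlq : l ∈ q.support := q.snd_mem_support_of_mem_edges (by simp [hq] : s(a, l) ∈ q.edges)
  have hkl : k ≠ l := by
    rintro rfl
    rcases hpq k hkp hlq with rfl | rfl
    exacts [hak.ne rfl, hkb.ne rfl]
  have hadj : (G.deleteEdges {s(a, b)}).Adj k l := by
    refine deleteEdges_adj.2 ⟨hK hk hl hkl, ?_⟩
    simp [hak.ne', hkb.ne]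
  have hchord := (hedges _).1 (hc.mem_edges ((hsupp k).2 (.inl hkp)) ((hsupp l).2 (.inr hlq)) hadj)
  simp [hp, hq, hak.ne', hkb.ne, hal.ne', hlb.ne, hkl] at hchord

lemma edges_eq_pair_or_edges_eq_of_isChordless [Finite V] {K : Set V}
    (huniq : ∀ K', G.IsNonEdgeMaxClique K' → K' = K) (hdisj : G.HolesEdgeDisjoint)
    {u : V} {cH : G.Walk u u} (hH : G.IsHole cH) (he : s(a, b) ∈ cH.edges)
    {p : (G.deleteEdges {s(a, b)}).Walk a b} (hp : p.IsPath) (hch : p.IsChordless) :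
    (∃ k ∈ K, p.edges = [s(a, k), s(k, b)]) ∨
      ∀ f, f ∈ p.edges ↔ f ∈ cH.edges ∧ f ≠ s(a, b) := by
  have hab : G.Adj a b := cH.adj_of_mem_edges he
  have hne : ∀ f ∈ p.edges, f ≠ s(a, b) := fun f hf hfe => by
    simpa [hfe] using p.edges_subset_edgeSet hf
  have h2 : 2 ≤ p.length := by
    by_contra! h
    interval_cases hl : p.length
    · exact hab.ne (eq_of_length_eq_zero hl)
    · simpa using adj_of_length_eq_one hl
  rcases h2.eq_or_lt with hlen2 | hlen3
  · obtain ⟨k, hak, hkb, hpe⟩ := p.exists_edges_eq_of_length_eq_two hlen2.symm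
    exact .inl ⟨k, mem_of_forall_isNonEdgeMaxClique_eq huniq hab
      (deleteEdges_adj.1 hak).1 (deleteEdges_adj.1 hkb).1.symm, hpe⟩
  have hC := isHole_cons_mapLe hab.symm hp hch hlen3
  rcases hdisj _ cH hC hH with heq | hCH
  · refine .inr fun f => ⟨fun hf => ⟨(heq f).1 ?_, hne f hf⟩, fun ⟨hf, hfe⟩ => ?_⟩
    · simp [hf]
    · simpa [hfe, Sym2.eq_swap] using (heq f).2 hf
  · exact absurd he (hCH _ (by simp [Sym2.eq_swap]))

end DeleteEdge

end SimpleGraph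

open SimpleGraph Walk

theorem new_holes_after_deleteEdge_description_general
    {V : Type*} [Fintype V] (G : SimpleGraph V)
    (hdisj : G.HolesEdgeDisjoint) (K : Set V)
    (hK : G.IsNonEdgeMaxClique K)
    (huniq : ∀ K', G.IsNonEdgeMaxClique K' → K' = K)
    {u : V} (cH : G.Walk u u) (hHole : G.IsHole cH)
    (vi vj : V) (he : s(vi, vj) ∈ cH.edges) :
    ∀ (w : V) (c' : (G.deleteEdges {s(vi, vj)}).Walk w w),
      (G.deleteEdges {s(vi, vj)}).IsHole c' →
      {e | e ∈ c'.edges} ∉ G.holeEdgeSets →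
      ∃ vk ∈ K, ∀ f, f ∈ c'.edges ↔
        ((f ∈ cH.edges ∧ f ≠ s(vi, vj)) ∨ f = s(vi, vk) ∨ f = s(vj, vk)) := by
  intro w c' hc' hnew
  have hnadj : ¬ (G.deleteEdges {s(vi, vj)}).Adj vi vj := by simp
  obtain ⟨hvi, hvj⟩ : vi ∈ c'.support ∧ vj ∈ c'.support := by
    by_contra hmiss
    exact hnew (mem_holeEdgeSets_of_isHole_deleteEdges hc' hmiss)
  obtain ⟨p, q, hp, hq, hpq, hsupp, hedges⟩ :=
    hc'.1.exists_isPath_union hvi hvj (cH.adj_of_mem_edges he).ne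
  have hc'ch := (isHole_iff.1 hc').2.2
  have hpch := hc'ch.of_union hnadj hpq (fun x hx => (hsupp x).2 (.inl hx))
    fun f hf => (hedges f).1 hf
  have hqch := hc'ch.of_union hnadj (fun z hq hp => hpq z hp hq)
    (fun x hx => (hsupp x).2 (.inr hx)) fun f hf => ((hedges f).1 hf).symm
  rcases edges_eq_pair_or_edges_eq_of_isChordless huniq hdisj hHole he hp hpch with
    ⟨vk, hk, hpe⟩ | hpH <;>
  rcases edges_eq_pair_or_edges_eq_of_isChordless huniq hdisj hHole he hq hqch with
    ⟨vl, hl, hqe⟩ | hqH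
  · exact absurd hc'ch (not_isChordless_of_edges_eq_pair hK.1.1 hpq hsupp hedges hk hl hpe hqe)
  · refine ⟨vk, hk, fun f => ?_⟩
    rw [hedges, hpe, hqH]
    simp [Sym2.eq_swap (a := vk), or_comm]
  · refine ⟨vl, hl, fun f => ?_⟩
    rw [hedges, hqe, hpH]
    simp [Sym2.eq_swap (a := vl)]
  · obtain ⟨f, hf⟩ := List.exists_mem_of_ne_nil _
      (mt edges_eq_nil.1 (not_nil_of_ne (cH.adj_of_mem_edges he).ne))
    exact (notMem_edges_of_mem_edges hnadj hpq hf ((hqH f).2 ((hpH f).1 hf))).elim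

/-- **Lemma 4, second part.** With the hypotheses of Lemma 4 and
`e = s(vᵢ, vⱼ)`, every hole of `G - e` which is not a hole of `G` is obtained from `H`
by replacing the edge `vᵢvⱼ` with the two edges `vᵢvₖ` and `vⱼvₖ` for some vertex
`vₖ` of `K`. -/
theorem new_holes_after_deleteEdge_description
    {V : Type*} [Fintype V] (G : SimpleGraph V) (hconn : G.Connected)
    (h : ℕ) (hh : G.holeEdgeSets.ncard = h)
    (hdisj : G.HolesEdgeDisjoint) (K : Set V)
    (hK : G.IsNonEdgeMaxClique K)
    (huniq : ∀ K', G.IsNonEdgeMaxClique K' → K' = K)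
    {u : V} (cH : G.Walk u u) (hHole : G.IsHole cH)
    (vi vj : V) (he : s(vi, vj) ∈ cH.edges)
    (hmany : h ≤ ((G.deleteEdges {s(vi, vj)}).holeEdgeSets).ncard) :
    ∀ (w : V) (c' : (G.deleteEdges {s(vi, vj)}).Walk w w),
      (G.deleteEdges {s(vi, vj)}).IsHole c' →
      {e | e ∈ c'.edges} ∉ G.holeEdgeSets →
      ∃ vk ∈ K, ∀ f, f ∈ c'.edges ↔
        ((f ∈ cH.edges ∧ f ≠ s(vi, vj)) ∨ f = s(vi, vk) ∨ f = s(vj, vk)) :=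
  new_holes_after_deleteEdge_description_general G hdisj K hK huniq cH hHole vi vj he
end
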